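/- Let {0} = L_0 ⊂ L_1 ⊂ ⋯ ⊂ L_m = L be a (q, γ)-filtration of a full-rank lattice L ⊆ ℝⁿ, let 1/γ ≤ α < 1, and for 1 ≤ j ≤ m let E_{j,α}(x) = Σ_{i=j}^m α^{i−j}·π_i(x), where π_i is the orthogonal projection onto span(L_i) ∩ span(L_{i−1})^⊥. Then for every 1 ≤ j ≤ m: λ₁(E_{j,α}(L)) = λ₁(L_j/L_{j−1}). -/

import Mathlib

open Metric Submodule
noncomputable section

/-- The length of a shortest nonzero vector of a set `A`. -/
def lambda1 {E : Type*} [NormedAddCommGroup E] (A : Set E) : ℝ :=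
  sInf (norm '' (A \ {0}))

/-- The covering radius of a lattice (given as a set): the supremum, over points `x` in the
real span of `A`, of the distance from `x` to `A`. -/
def covRad {E : Type*} [NormedAddCommGroup E] [NormedSpace ℝ E] (A : Set E) : ℝ :=
  sSup ((fun x => Metric.infDist x A) '' ((Submodule.span ℝ A : Submodule ℝ E) : Set E))

/-- The image of the set `A` under the orthogonal projection onto the orthogonal complement
of the real span of `S`. -/
def projPerp {n : ℕ} (S A : Set (EuclideanSpace ℝ (Fin n))) : Set (EuclideanSpace ℝ (Fin n)) :=
  (fun x => ((orthogonalProjection (Submodule.span ℝ S)ᗮ) x : EuclideanSpace ℝ (Fin n))) '' A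

/-- The quotient lattice `L_j / L_{j−1}`: the orthogonal projection of `L_j` onto the
orthogonal complement of the span of `L_{j−1}`. -/
def quotLat {n : ℕ} (Ls : ℕ → Submodule ℤ (EuclideanSpace ℝ (Fin n))) (j : ℕ) :
    Set (EuclideanSpace ℝ (Fin n)) :=
  projPerp (Ls (j - 1) : Set (EuclideanSpace ℝ (Fin n)))
    (Ls j : Set (EuclideanSpace ℝ (Fin n)))

/-- `Ls 0 ⊂ Ls 1 ⊂ ⋯ ⊂ Ls m` is a chain of primitive sublattices of `L` from `{0}` to `L`. -/
def IsPrimitiveChain {n : ℕ} (L : Submodule ℤ (EuclideanSpace ℝ (Fin n))) (m : ℕ)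
    (Ls : ℕ → Submodule ℤ (EuclideanSpace ℝ (Fin n))) : Prop :=
  Ls 0 = ⊥ ∧ Ls m = L ∧ (∀ j, j < m → Ls j < Ls (j + 1)) ∧
    ∀ j, j ≤ m → (Ls j : Set (EuclideanSpace ℝ (Fin n)))
      = (L : Set (EuclideanSpace ℝ (Fin n)))
        ∩ (Submodule.span ℝ (Ls j : Set (EuclideanSpace ℝ (Fin n))) :
            Submodule ℝ (EuclideanSpace ℝ (Fin n)))

/-- A `(q, γ)`-filtration of `L`: a chain of primitive sublattices such that
`μ(L_j/L_{j−1}) ≤ q·λ₁(L_j/L_{j−1})/2` and `λ₁(L_{j+1}/L_j) ≥ γ·λ₁(L_j/L_{j−1})`. -/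
def IsQGFiltration {n : ℕ} (L : Submodule ℤ (EuclideanSpace ℝ (Fin n))) (m : ℕ)
    (Ls : ℕ → Submodule ℤ (EuclideanSpace ℝ (Fin n))) (q γ : ℝ) : Prop :=
  IsPrimitiveChain L m Ls ∧
  (∀ j, 1 ≤ j → j ≤ m → covRad (quotLat Ls j) ≤ q * lambda1 (quotLat Ls j) / 2) ∧
  (∀ j, 1 ≤ j → j < m → lambda1 (quotLat Ls (j + 1)) ≥ γ * lambda1 (quotLat Ls j))

/-- The `j`-th "compressed projection" embedding `E_{j,α}(x) = Σ_{i=j}^m α^{i−j}·π_i(x)`,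
where `π_i` is the orthogonal projection onto `span(L_i) ∩ span(L_{i−1})ᗮ`. -/
def filtEmbed {n : ℕ} (Ls : ℕ → Submodule ℤ (EuclideanSpace ℝ (Fin n))) (m : ℕ) (α : ℝ)
    (j : ℕ) (x : EuclideanSpace ℝ (Fin n)) : EuclideanSpace ℝ (Fin n) :=
  ∑ i ∈ Finset.Icc j m, α ^ (i - j) •
    ((orthogonalProjection
        ((Submodule.span ℝ (Ls i : Set (EuclideanSpace ℝ (Fin n)))) ⊓
          (Submodule.span ℝ (Ls (i - 1) : Set (EuclideanSpace ℝ (Fin n))))ᗮ) x :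
      EuclideanSpace ℝ (Fin n)))

/-!
On `L_j` the map `E_{j,α}` is the projection orthogonal to `span L_{j-1}`, so
`L_j/L_{j-1} ⊆ E_{j,α}(L)`, which gives `≤`. Conversely, let `x ∈ L` with `E_{j,α}(x) ≠ 0` and let
`k ≥ j` be the largest index with `π_k(x) ≠ 0`. Then `x ∈ span L_k`, hence `x ∈ L_k` by
primitivity, and `π_k(x)` is a nonzero vector of `L_k/L_{k-1}`. The `π_i(x)` are pairwise
orthogonal, so pairing with `π_k(x)` gives
`‖E_{j,α}(x)‖ ≥ α^{k-j} ‖π_k(x)‖ ≥ α^{k-j} λ₁(L_k/L_{k-1}) ≥ (αγ)^{k-j} λ₁(L_j/L_{j-1})`,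
and `αγ ≥ 1`.
-/

open scoped RealInnerProductSpace

namespace Submodule

variable {F : Type*} [NormedAddCommGroup F] [InnerProductSpace ℝ F] {U V : Submodule ℝ F}

theorem starProjection_inf_orthogonal_eq_sub [U.HasOrthogonalProjection]
    [V.HasOrthogonalProjection] [(V ⊓ Uᗮ).HasOrthogonalProjection] (h : U ≤ V) (x : F) :
    (V ⊓ Uᗮ).starProjection x = V.starProjection x - U.starProjection x := by
  refine eq_starProjection_of_mem_orthogonal' (z := (x - V.starProjection x) + U.starProjection x)
    ⟨sub_mem (V.starProjection_apply_mem x) (h (U.starProjection_apply_mem x)), ?_⟩ ?_ (by abel)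
  · simpa using sub_mem (U.sub_starProjection_mem_orthogonal x)
      (orthogonal_le h (V.sub_starProjection_mem_orthogonal x))
  · exact add_mem (orthogonal_le inf_le_left (V.sub_starProjection_mem_orthogonal x))
      (orthogonal_le inf_le_right (U.le_orthogonal_orthogonal (U.starProjection_apply_mem x)))

theorem starProjection_inf_orthogonal_of_mem [U.HasOrthogonalProjection]
    [V.HasOrthogonalProjection] [(V ⊓ Uᗮ).HasOrthogonalProjection] (h : U ≤ V) {x : F}
    (hx : x ∈ V) : (V ⊓ Uᗮ).starProjection x = Uᗮ.starProjection x := by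
  rw [starProjection_inf_orthogonal_eq_sub h, starProjection_eq_self_iff.2 hx,
    starProjection_orthogonal_val]

theorem starProjection_inf_orthogonal_eq_zero_of_mem [(V ⊓ Uᗮ).HasOrthogonalProjection] {x : F}
    (hx : x ∈ U) : (V ⊓ Uᗮ).starProjection x = 0 :=
  (starProjection_apply_eq_zero_iff _).2
    (orthogonal_le inf_le_right (U.le_orthogonal_orthogonal hx))

end Submodule

section Flag

variable {F : Type*} [NormedAddCommGroup F] [InnerProductSpace ℝ F] [FiniteDimensional ℝ F]

def layerProj (V : ℕ → Submodule ℝ F) (i : ℕ) : F →L[ℝ] F :=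
  (V i ⊓ (V (i - 1))ᗮ).starProjection

def compressedProj (V : ℕ → Submodule ℝ F) (m : ℕ) (α : ℝ) (j : ℕ) (x : F) : F :=
  ∑ i ∈ Finset.Icc j m, α ^ (i - j) • layerProj V i x

variable {V : ℕ → Submodule ℝ F} {m : ℕ}

theorem layerProj_mem (i : ℕ) (x : F) : layerProj V i x ∈ V i :=
  (Submodule.mem_inf.1 (Submodule.starProjection_apply_mem _ x)).1

theorem layerProj_mem_orthogonal (i : ℕ) (x : F) : layerProj V i x ∈ (V (i - 1))ᗮ :=
  (Submodule.mem_inf.1 (Submodule.starProjection_apply_mem _ x)).2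

theorem layerProj_eq_zero_of_mem {i : ℕ} {x : F} (hx : x ∈ V (i - 1)) : layerProj V i x = 0 :=
  Submodule.starProjection_inf_orthogonal_eq_zero_of_mem hx

theorem inner_layerProj_of_lt (hV : MonotoneOn V (Set.Iic m)) {i k : ℕ} (hik : i < k)
    (hkm : k ≤ m) (x y : F) : ⟪layerProj V i x, layerProj V k y⟫ = 0 := by
  have hle : V i ≤ V (k - 1) :=
    hV (Set.mem_Iic.2 (by omega)) (Set.mem_Iic.2 (by omega)) (by omega)
  exact Submodule.inner_right_of_mem_orthogonal (hle (layerProj_mem i x))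
    (layerProj_mem_orthogonal k y)

theorem inner_compressedProj_layerProj (hV : MonotoneOn V (Set.Iic m)) (α : ℝ) {j k : ℕ}
    (hjk : j ≤ k) (hkm : k ≤ m) (x : F) :
    ⟪compressedProj V m α j x, layerProj V k x⟫ = α ^ (k - j) * ‖layerProj V k x‖ ^ 2 := by
  rw [compressedProj, sum_inner, Finset.sum_eq_single_of_mem k (Finset.mem_Icc.2 ⟨hjk, hkm⟩)]
  · rw [real_inner_smul_left, real_inner_self_eq_norm_sq]
  · intro i hi hik
    rw [Finset.mem_Icc] at hi
    rw [real_inner_smul_left]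
    rcases hik.lt_or_gt with hlt | hgt
    · rw [inner_layerProj_of_lt hV hlt hkm, mul_zero]
    · rw [real_inner_comm, inner_layerProj_of_lt hV hgt hi.2, mul_zero]

theorem pow_mul_norm_layerProj_le (hV : MonotoneOn V (Set.Iic m)) (α : ℝ) {j k : ℕ}
    (hjk : j ≤ k) (hkm : k ≤ m) (x : F) :
    α ^ (k - j) * ‖layerProj V k x‖ ≤ ‖compressedProj V m α j x‖ := by
  rcases (norm_nonneg (layerProj V k x)).eq_or_lt with h0 | hpos
  · rw [← h0, mul_zero]
    exact norm_nonneg _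
  refine le_of_mul_le_mul_right ?_ hpos
  calc α ^ (k - j) * ‖layerProj V k x‖ * ‖layerProj V k x‖
      = ⟪compressedProj V m α j x, layerProj V k x⟫ := by
        rw [inner_compressedProj_layerProj hV α hjk hkm]; ring
    _ ≤ ‖compressedProj V m α j x‖ * ‖layerProj V k x‖ := real_inner_le_norm _ _

theorem compressedProj_of_mem (hV : MonotoneOn V (Set.Iic m)) (α : ℝ) {j : ℕ} (hjm : j ≤ m)
    {y : F} (hy : y ∈ V j) : compressedProj V m α j y = (V (j - 1))ᗮ.starProjection y := by
  rw [compressedProj, Finset.sum_eq_single_of_mem j (Finset.mem_Icc.2 ⟨le_rfl, hjm⟩)]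
  · rw [Nat.sub_self, pow_zero, one_smul, layerProj,
      Submodule.starProjection_inf_orthogonal_of_mem
        (hV (Set.mem_Iic.2 (by omega)) (Set.mem_Iic.2 hjm) (Nat.sub_le j 1)) hy]
  · intro i hi hij
    rw [Finset.mem_Icc] at hi
    rw [layerProj_eq_zero_of_mem
      (hV (Set.mem_Iic.2 hjm) (Set.mem_Iic.2 (by omega)) (by omega) hy), smul_zero]

theorem starProjection_eq_of_layerProj_eq_zero (hV : MonotoneOn V (Set.Iic m)) {k : ℕ}
    (hkm : k ≤ m) {x : F} (hx : ∀ i, k < i → i ≤ m → layerProj V i x = 0) :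
    (V k).starProjection x = (V m).starProjection x := by
  induction m, hkm using Nat.le_induction with
  | base => rfl
  | succ m hkm ih =>
    have hstep : layerProj V (m + 1) x = (V (m + 1)).starProjection x - (V m).starProjection x :=
      Submodule.starProjection_inf_orthogonal_eq_sub
        (hV (Set.mem_Iic.2 (by omega)) (Set.mem_Iic.2 le_rfl) (Nat.sub_le _ 1)) x
    have htop := hx (m + 1) (by omega) le_rfl
    rw [hstep, sub_eq_zero] at htop
    rw [ih (hV.mono (Set.Iic_subset_Iic.2 (Nat.le_succ m))) fun i hki him => hx i hki (by omega),
      htop]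

theorem mem_of_layerProj_eq_zero (hV : MonotoneOn V (Set.Iic m)) {k : ℕ} (hkm : k ≤ m) {x : F}
    (hxm : x ∈ V m) (hx : ∀ i, k < i → i ≤ m → layerProj V i x = 0) : x ∈ V k := by
  rw [← Submodule.starProjection_eq_self_iff, starProjection_eq_of_layerProj_eq_zero hV hkm hx,
    Submodule.starProjection_eq_self_iff.2 hxm]

theorem exists_top_layerProj_ne_zero {α : ℝ} {j : ℕ} {x : F} (hx : compressedProj V m α j x ≠ 0) :
    ∃ k, j ≤ k ∧ k ≤ m ∧ layerProj V k x ≠ 0 ∧ ∀ i, k < i → i ≤ m → layerProj V i x = 0 := by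
  classical
  obtain ⟨i, hi, hne⟩ : ∃ i ∈ Finset.Icc j m, layerProj V i x ≠ 0 := by
    by_contra! h
    exact hx (Finset.sum_eq_zero fun i hi => by rw [h i hi, smul_zero])
  rw [Finset.mem_Icc] at hi
  refine ⟨Nat.findGreatest (fun i => layerProj V i x ≠ 0) m,
    hi.1.trans (Nat.le_findGreatest hi.2 hne), Nat.findGreatest_le m,
    Nat.findGreatest_spec (P := fun i => layerProj V i x ≠ 0) hi.2 hne, fun i hki him => ?_⟩
  simpa using Nat.findGreatest_is_greatest hki him

end Flag

section Lambda1

variable {E : Type*} [NormedAddCommGroup E] {A B : Set E}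

theorem lambda1_nonneg (A : Set E) : 0 ≤ lambda1 A :=
  Real.sInf_nonneg (by rintro _ ⟨x, _, rfl⟩; exact norm_nonneg x)

theorem lambda1_le_norm {x : E} (hx : x ∈ A) (hx0 : x ≠ 0) : lambda1 A ≤ ‖x‖ :=
  csInf_le ⟨0, by rintro _ ⟨y, _, rfl⟩; exact norm_nonneg y⟩ ⟨x, ⟨hx, hx0⟩, rfl⟩

theorem le_lambda1 {c : ℝ} (hA : ∃ x ∈ A, x ≠ 0) (h : ∀ x ∈ A, x ≠ 0 → c ≤ ‖x‖) :
    c ≤ lambda1 A := by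
  obtain ⟨x, hx, hx0⟩ := hA
  refine le_csInf ⟨‖x‖, x, ⟨hx, hx0⟩, rfl⟩ ?_
  rintro _ ⟨y, ⟨hy, hy0⟩, rfl⟩
  exact h y hy hy0

theorem lambda1_le_lambda1_of_subset (hAB : A ⊆ B) (hA : ∃ x ∈ A, x ≠ 0) :
    lambda1 B ≤ lambda1 A :=
  le_lambda1 hA fun _ hx hx0 => lambda1_le_norm (hAB hx) hx0

end Lambda1

theorem pow_sub_mul_le_of_mul_le_succ {f : ℕ → ℝ} {c : ℝ} (hc : 0 ≤ c) {j k : ℕ} (hjk : j ≤ k)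
    (hf : ∀ i, j ≤ i → i < k → c * f i ≤ f (i + 1)) : c ^ (k - j) * f j ≤ f k := by
  induction k, hjk using Nat.le_induction with
  | base => simp
  | succ k hjk ih =>
    calc c ^ (k + 1 - j) * f j = c * (c ^ (k - j) * f j) := by
          rw [Nat.sub_add_comm hjk, pow_succ]; ring
      _ ≤ c * f k := mul_le_mul_of_nonneg_left (ih fun i hji hik => hf i hji (by omega)) hc
      _ ≤ f (k + 1) := hf k hjk (by omega)

section Lattice

variable {n : ℕ} {L : Submodule ℤ (EuclideanSpace ℝ (Fin n))} {m : ℕ}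
  {Ls : ℕ → Submodule ℤ (EuclideanSpace ℝ (Fin n))}

def spanFlag (Ls : ℕ → Submodule ℤ (EuclideanSpace ℝ (Fin n))) (i : ℕ) :
    Submodule ℝ (EuclideanSpace ℝ (Fin n)) :=
  Submodule.span ℝ (Ls i : Set (EuclideanSpace ℝ (Fin n)))

theorem filtEmbed_eq_compressedProj (α : ℝ) (j : ℕ) :
    filtEmbed Ls m α j = compressedProj (spanFlag Ls) m α j :=
  rfl

namespace IsPrimitiveChain

theorem monotoneOn (hc : IsPrimitiveChain L m Ls) : MonotoneOn Ls (Set.Iic m) := by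
  intro a _ b hb hab
  induction b, hab using Nat.le_induction with
  | base => exact le_rfl
  | succ b _ ih =>
    rw [Set.mem_Iic] at hb
    exact (ih (Set.mem_Iic.2 (by omega))).trans (hc.2.2.1 b (by omega)).le

theorem monotoneOn_spanFlag (hc : IsPrimitiveChain L m Ls) :
    MonotoneOn (spanFlag Ls) (Set.Iic m) :=
  fun _ ha _ hb hab => Submodule.span_mono (hc.monotoneOn ha hb hab)

theorem le (hc : IsPrimitiveChain L m Ls) {k : ℕ} (hk : k ≤ m) : Ls k ≤ L :=
  hc.2.1 ▸ hc.monotoneOn (Set.mem_Iic.2 hk) (Set.mem_Iic.2 le_rfl) hk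

theorem mem_of_mem_spanFlag (hc : IsPrimitiveChain L m Ls) {k : ℕ} (hk : k ≤ m)
    {x : EuclideanSpace ℝ (Fin n)} (hxL : x ∈ L) (hx : x ∈ spanFlag Ls k) : x ∈ Ls k := by
  change x ∈ (Ls k : Set (EuclideanSpace ℝ (Fin n)))
  rw [hc.2.2.2 k hk]
  exact ⟨hxL, hx⟩

theorem exists_mem_quotLat_ne_zero (hc : IsPrimitiveChain L m Ls) {j : ℕ} (hj1 : 1 ≤ j)
    (hjm : j ≤ m) : ∃ z ∈ quotLat Ls j, z ≠ 0 := by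
  obtain ⟨y, hyj, hy⟩ := SetLike.exists_of_lt (hc.2.2.1 (j - 1) (by omega))
  rw [Nat.sub_add_cancel hj1] at hyj
  refine ⟨_, ⟨y, hyj, rfl⟩, fun h0 => hy (hc.mem_of_mem_spanFlag (by omega) (hc.le hjm hyj) ?_)⟩
  rw [← Submodule.orthogonal_orthogonal (spanFlag Ls (j - 1)),
    ← Submodule.starProjection_apply_eq_zero_iff]
  exact h0

theorem quotLat_subset_image_filtEmbed (hc : IsPrimitiveChain L m Ls) (α : ℝ) {j : ℕ}
    (hjm : j ≤ m) : quotLat Ls j ⊆ filtEmbed Ls m α j '' (L : Set (EuclideanSpace ℝ (Fin n))) := by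
  rintro _ ⟨y, hy, rfl⟩
  exact ⟨y, hc.le hjm hy,
    compressedProj_of_mem hc.monotoneOn_spanFlag α hjm (Submodule.subset_span hy)⟩

end IsPrimitiveChain

theorem IsQGFiltration.pow_mul_lambda1_quotLat_le {q γ : ℝ} (hfil : IsQGFiltration L m Ls q γ)
    (hγ : 0 ≤ γ) {j k : ℕ} (hj1 : 1 ≤ j) (hjk : j ≤ k) (hkm : k ≤ m) :
    γ ^ (k - j) * lambda1 (quotLat Ls j) ≤ lambda1 (quotLat Ls k) :=
  pow_sub_mul_le_of_mul_le_succ hγ hjk fun i hji hik => hfil.2.2 i (by omega) (by omega)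

theorem IsQGFiltration.lambda1_quotLat_le_norm_filtEmbed {q γ α : ℝ}
    (hfil : IsQGFiltration L m Ls q γ) (hγ : 0 < γ) (hαγ : 1 ≤ α * γ) {j : ℕ} (hj1 : 1 ≤ j)
    {x : EuclideanSpace ℝ (Fin n)} (hxL : x ∈ L) (hx : filtEmbed Ls m α j x ≠ 0) :
    lambda1 (quotLat Ls j) ≤ ‖filtEmbed Ls m α j x‖ := by
  have hc := hfil.1
  have hV := hc.monotoneOn_spanFlag
  have hα : 0 ≤ α := (pos_of_mul_pos_left (one_pos.trans_le hαγ) hγ.le).le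
  rw [filtEmbed_eq_compressedProj] at hx ⊢
  obtain ⟨k, hjk, hkm, hk0, htop⟩ := exists_top_layerProj_ne_zero hx
  have hxm : x ∈ spanFlag Ls m := by
    rw [spanFlag, hc.2.1]; exact Submodule.subset_span hxL
  have hxk := mem_of_layerProj_eq_zero hV hkm hxm htop
  have hmem : layerProj (spanFlag Ls) k x ∈ quotLat Ls k :=
    ⟨x, hc.mem_of_mem_spanFlag hkm hxL hxk, (Submodule.starProjection_inf_orthogonal_of_mem
      (hV (Set.mem_Iic.2 (by omega)) (Set.mem_Iic.2 hkm) (Nat.sub_le k 1)) hxk).symm⟩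
  calc lambda1 (quotLat Ls j)
      ≤ (α * γ) ^ (k - j) * lambda1 (quotLat Ls j) :=
        le_mul_of_one_le_left (lambda1_nonneg _) (one_le_pow₀ hαγ)
    _ = α ^ (k - j) * (γ ^ (k - j) * lambda1 (quotLat Ls j)) := by rw [mul_pow, mul_assoc]
    _ ≤ α ^ (k - j) * lambda1 (quotLat Ls k) := by
        gcongr; exact hfil.pow_mul_lambda1_quotLat_le hγ.le hj1 hjk hkm
    _ ≤ α ^ (k - j) * ‖layerProj (spanFlag Ls) k x‖ := by gcongr; exact lambda1_le_norm hmem hk0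
    _ ≤ _ := pow_mul_norm_layerProj_le hV α hjk hkm x

end Lattice

theorem lambda1_filtEmbed_eq_general
    (n : ℕ) (L : Submodule ℤ (EuclideanSpace ℝ (Fin n)))
    (m : ℕ) (Ls : ℕ → Submodule ℤ (EuclideanSpace ℝ (Fin n))) (q γ : ℝ) (hγ : 1 < γ)
    (hfil : IsQGFiltration L m Ls q γ)
    (α : ℝ) (hα0 : 1 / γ ≤ α) (j : ℕ) (hj1 : 1 ≤ j) (hjm : j ≤ m) :
    lambda1 (filtEmbed Ls m α j '' (L : Set (EuclideanSpace ℝ (Fin n)))) = lambda1 (quotLat Ls j) := by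
  have hγ0 : 0 < γ := one_pos.trans hγ
  have hαγ : 1 ≤ α * γ := by rwa [div_le_iff₀ hγ0] at hα0
  have hsub := hfil.1.quotLat_subset_image_filtEmbed α hjm
  obtain ⟨z, hz, hz0⟩ := hfil.1.exists_mem_quotLat_ne_zero hj1 hjm
  refine le_antisymm (lambda1_le_lambda1_of_subset hsub ⟨z, hz, hz0⟩) ?_
  refine le_lambda1 ⟨z, hsub hz, hz0⟩ ?_
  rintro _ ⟨x, hxL, rfl⟩ hx0
  exact hfil.lambda1_quotLat_le_norm_filtEmbed hγ0 hαγ hj1 hxL hx0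

/-- For a `(q, γ)`-filtration of `L` and `1/γ ≤ α < 1`, the shortest nonzero vector of the
compressed projection `E_{j,α}(L)` has the same length as that of `L_j/L_{j−1}`. -/
theorem lambda1_filtEmbed_eq
    (n : ℕ) (L : Submodule ℤ (EuclideanSpace ℝ (Fin n))) [DiscreteTopology L] (hL : IsZLattice ℝ L)
    (m : ℕ) (Ls : ℕ → Submodule ℤ (EuclideanSpace ℝ (Fin n))) (q γ : ℝ) (hq : 1 ≤ q) (hγ : 1 < γ)
    (hfil : IsQGFiltration L m Ls q γ)
    (α : ℝ) (hα0 : 1 / γ ≤ α) (hα1 : α < 1) (j : ℕ) (hj1 : 1 ≤ j) (hjm : j ≤ m) :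
    lambda1 (filtEmbed Ls m α j '' (L : Set (EuclideanSpace ℝ (Fin n)))) = lambda1 (quotLat Ls j) :=
  lambda1_filtEmbed_eq_general n L m Ls q γ hγ hfil α hα0 j hj1 hjm
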